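/- arXiv:0804.3671 — 4 statements merged into one kernel-verified Lean document; each statement's English description precedes it below -/
import Mathlib

section
/- The prefix code K(w) has a chain structure: there exist an integer k ≥ 0 and nonempty words q₁, q₂, …, q_k such that K(w) = { q_i ++ q_{i−1} ++ ⋯ ++ q₁ : 1 ≤ i ≤ k }; equivalently, the elements of K(w) can be listed in order of strictly increasing length so that each one is a proper suffix of the next. -/
/-- Elementwise concatenation of two languages: `L₁·L₂`. -/
def lconc {α : Type*} (L₁ L₂ : Set (List α)) : Set (List α) :=
  {x | ∃ a ∈ L₁, ∃ b ∈ L₂, x = a ++ b}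

/-- Kleene star of a language: all finite concatenations of its elements. -/
def lstar {α : Type*} (L : Set (List α)) : Set (List α) :=
  {x | ∃ S : List (List α), (∀ y ∈ S, y ∈ L) ∧ x = S.flatten}

/-- `A⁺`: the set of nonempty words. -/
def Aplus (α : Type*) : Set (List α) := {x : List α | x ≠ []}

/-- `w` occurs at position `i` in `T`. -/
def occursAt {α : Type*} (w T : List α) (i : ℕ) : Prop :=
  ∃ x y : List α, T = x ++ w ++ y ∧ x.length = i

/-- The autocorrelation set `C(w)`. -/
def Corr {α : Type*} (w : List α) : Set (List α) :=
  {c | c.length < w.length ∧ ∃ e, w ++ c = e ++ w}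

/-- `C∘(w) = C(w) \ {[]}`. -/
def CorrPos {α : Type*} (w : List α) : Set (List α) := Corr w \ {[]}

/-- The prefix code `K(w) = C∘(w) \ C∘(w)·A⁺`. -/
def KCode {α : Type*} (w : List α) : Set (List α) :=
  CorrPos w \ lconc (CorrPos w) (Aplus α)

/-!
Every element `c` of `C(w)` is a suffix of `w`, since `c` and `w` are both suffixes of
`w ++ c = e ++ w` and `c` is the shorter one. The suffixes of a word are totally ordered by
the suffix relation, so any set of nonempty suffixes of `w`, in particular `K(w)`, is a chain
`q₁ <:+ q₂ ++ q₁ <:+ ⋯`, whose links `qᵢ` are the successive differences.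
-/

def suffixChain {α : Type*} (qs : List (List α)) : Set (List α) :=
  {v | ∃ i, 1 ≤ i ∧ i ≤ qs.length ∧ v = ((qs.take i).reverse).flatten}

@[simp]
theorem suffixChain_nil {α : Type*} : suffixChain ([] : List (List α)) = ∅ := by
  ext v
  simp only [suffixChain, List.length_nil, Set.mem_ofPred_eq, Set.mem_empty_iff_false,
    iff_false, not_exists, not_and]
  omega

theorem suffixChain_append_singleton {α : Type*} (qs : List (List α)) (q : List α) :
    suffixChain (qs ++ [q]) = insert (q ++ qs.reverse.flatten) (suffixChain qs) := by
  ext v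
  simp only [suffixChain, Set.mem_ofPred_eq, Set.mem_insert_iff, List.length_append,
    List.length_singleton]
  constructor
  · rintro ⟨i, hi₁, hi₂, rfl⟩
    rcases Nat.lt_or_ge i (qs.length + 1) with hi | hi
    · exact Or.inr ⟨i, hi₁, by omega, by rw [List.take_append_of_le_length (by omega)]⟩
    · left
      rw [List.take_of_length_le (by simpa using hi)]
      simp
  · rintro (rfl | ⟨i, hi₁, hi₂, rfl⟩)
    · exact ⟨qs.length + 1, by omega, le_rfl, by rw [List.take_of_length_le (by simp)]; simp⟩
    · exact ⟨i, hi₁, by omega, by rw [List.take_append_of_le_length hi₂]⟩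

theorem exists_suffixChain_eq_of_isSuffix {α : Type*} (w : List α) (S : Set (List α))
    (hS : ∀ c ∈ S, c ≠ [] ∧ c <:+ w) :
    ∃ qs : List (List α), (∀ q ∈ qs, q ≠ []) ∧ qs.reverse.flatten <:+ w ∧
      S = suffixChain qs := by
  induction w generalizing S with
  | nil =>
    refine ⟨[], by simp, by simp, ?_⟩
    rw [suffixChain_nil, Set.eq_empty_iff_forall_notMem]
    intro c hc
    exact (hS c hc).1 (List.suffix_nil.1 (hS c hc).2)
  | cons a w ih =>
    have hS' : ∀ c ∈ S \ {a :: w}, c ≠ [] ∧ c <:+ w := by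
      rintro c ⟨hc, hcw⟩
      exact ⟨(hS c hc).1, (List.suffix_cons_iff.1 (hS c hc).2).resolve_left hcw⟩
    obtain ⟨qs, hqs, ⟨t, ht⟩, hS'eq⟩ := ih _ hS'
    by_cases hw : a :: w ∈ S
    · refine ⟨qs ++ [a :: t], ?_, by simp [ht], ?_⟩
      · simpa [or_imp, forall_and] using hqs
      · rw [suffixChain_append_singleton, ← hS'eq, List.cons_append, ht]
        exact (Set.insert_sdiff_self_of_mem hw).symm
    · refine ⟨qs, hqs, (List.suffix_append t _).trans (ht ▸ List.suffix_cons a w), ?_⟩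
      rwa [Set.sdiff_singleton_eq_self hw] at hS'eq

theorem isSuffix_of_mem_corr {α : Type*} {w c : List α} (hc : c ∈ Corr w) : c <:+ w := by
  obtain ⟨hlt, e, he⟩ := hc
  exact List.suffix_of_suffix_length_le (he ▸ List.suffix_append w c)
    (List.suffix_append e w) hlt.le

theorem kcode_chain_structure_general {α : Type*} (w : List α) :
    ∃ qs : List (List α), (∀ q ∈ qs, q ≠ []) ∧
      KCode w = {v | ∃ i, 1 ≤ i ∧ i ≤ qs.length ∧ v = ((qs.take i).reverse).flatten} := by
  have hK : ∀ c ∈ KCode w, c ≠ [] ∧ c <:+ w := fun c ⟨⟨hc, hc0⟩, _⟩ =>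
    ⟨hc0, isSuffix_of_mem_corr hc⟩
  obtain ⟨qs, hqs, -, hKeq⟩ := exists_suffixChain_eq_of_isSuffix w (KCode w) hK
  exact ⟨qs, hqs, hKeq⟩

/-- chain structure of the prefix code: there are nonempty words
`q₁, …, q_k` with `K(w) = { q_i ++ q_{i-1} ++ ⋯ ++ q₁ : 1 ≤ i ≤ k }`. -/
theorem kcode_chain_structure {α : Type*} (w : List α) (hw : w ≠ []) :
    ∃ qs : List (List α), (∀ q ∈ qs, q ≠ []) ∧
      KCode w = {v | ∃ i, 1 ≤ i ∧ i ≤ qs.length ∧ v = ((qs.take i).reverse).flatten} :=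
  kcode_chain_structure_general w
end

section
/- The fundamental clump decomposition of texts holds as a language identity: A* = N(w) ∪ R(w)·(C∘(w))*·( (M(w) \ K(w))·(C∘(w))* )*·U(w), where A* is the set of all words over α. -/
/-- The minimal language `M(w)`: nonempty words `m` such that `w ++ m` ends with `w`
and every occurrence of `w` in `w ++ m` is at position `0` or at position `|m|`. -/
def MinLang {α : Type*} (w : List α) : Set (List α) :=
  {m | m ≠ [] ∧ (∃ e, w ++ m = e ++ w) ∧
    ∀ i, occursAt w (w ++ m) i → i = 0 ∨ i = m.length}

/-- The "Right" language `R(w)`: words in which `w` occurs exactly once,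
at the right extremity. -/
def RightLang {α : Type*} (w : List α) : Set (List α) :=
  {r | occursAt w r (r.length - w.length) ∧
    ∀ i, occursAt w r i → i = r.length - w.length}

/-- The "Ultimate" language `U(w)`: words `u` such that the only occurrence of `w`
in `w ++ u` is at position `0`. -/
def UltLang {α : Type*} (w : List α) : Set (List α) :=
  {u | ∀ i, occursAt w (w ++ u) i → i = 0}

/-- The "Not" language `N(w)`: words with no occurrence of `w`. -/
def NotLang {α : Type*} (w : List α) : Set (List α) :=
  {t | ∀ i, ¬ occursAt w t i}

/-! A text containing `w` is cut after its last occurrence of `w`, which leaves a tail in `U(w)`.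
The prefix ending there is cut at its successive occurrences of `w` into a word of `R(w)`
followed by words of `M(w)`. A minimal word lies either in `K(w) ⊆ C∘(w)` or in `M(w) \ K(w)`,
and the Kleene-algebra inequality `(a + b)∗ ≤ a∗ (b a∗)∗` regroups `M(w)∗` into
`C∘(w)∗ ((M(w) \ K(w)) C∘(w)∗)∗`. -/

open Computability

theorem kstar_add_le_kstar_mul_kstar {β : Type*} [KleeneAlgebra β] (a b : β) :
    (a + b)∗ ≤ a∗ * (b * a∗)∗ := by
  refine kstar_le_of_mul_le_right (one_le_mul one_le_kstar one_le_kstar) ?_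
  rw [add_mul, ← mul_assoc, ← mul_assoc]
  exact add_le (mul_le_mul_left mul_kstar_le_kstar _)
    (mul_kstar_le_kstar.trans (le_mul_of_one_le_left' one_le_kstar))

section
variable {α : Type*}

/-- Reading a set of words as a `Language` turns `lconc` and `lstar` into the product and star
of the Kleene algebra `Language α`. -/
def toLanguage (L : Set (List α)) : Language α := L

@[simp] theorem mem_toLanguage {L : Set (List α)} {x : List α} : x ∈ toLanguage L ↔ x ∈ L :=
  Iff.rfl

theorem toLanguage_lconc (L₁ L₂ : Set (List α)) :
    toLanguage (lconc L₁ L₂) = toLanguage L₁ * toLanguage L₂ := by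
  ext x
  simp only [mem_toLanguage, lconc, Language.mem_mul, Set.mem_ofPred_eq, eq_comm]

theorem toLanguage_lstar (L : Set (List α)) : toLanguage (lstar L) = (toLanguage L)∗ := by
  ext x
  simp only [mem_toLanguage, lstar, Language.mem_kstar, Set.mem_ofPred_eq, and_comm]

theorem occursAt.add_length_le {w T : List α} {i : ℕ} (h : occursAt w T i) :
    i + w.length ≤ T.length := by
  obtain ⟨x, y, rfl, rfl⟩ := h
  simp only [List.length_append]
  omega

theorem occursAt.append_left {w T : List α} {i : ℕ} (h : occursAt w T i) (x : List α) :
    occursAt w (x ++ T) (x.length + i) := by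
  obtain ⟨a, b, rfl, rfl⟩ := h
  exact ⟨x ++ a, b, by simp only [List.append_assoc], List.length_append⟩

theorem occursAt_length_append (w e : List α) : occursAt w (e ++ w) e.length :=
  ⟨e, [], (List.append_nil _).symm, rfl⟩

theorem mem_RightLang_of_forall_le {w e : List α}
    (h : ∀ i, occursAt w (e ++ w) i → e.length ≤ i) : e ++ w ∈ RightLang w := by
  rw [RightLang, Set.mem_ofPred_eq, List.length_append, Nat.add_sub_cancel]
  refine ⟨occursAt_length_append w e, fun i hi => ?_⟩
  have := hi.add_length_le
  rw [List.length_append] at this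
  exact le_antisymm (by omega) (h i hi)

theorem mem_MinLang_of_isGreatest {w e x y : List α} (hxy : e ++ w = x ++ w ++ y)
    (hmax : IsGreatest {q | occursAt w (e ++ w) q ∧ q < e.length} x.length) :
    y ∈ MinLang w := by
  have hlen : e.length = x.length + y.length := by
    have := congrArg List.length hxy
    simp only [List.length_append] at this
    omega
  have hxy' : e ++ w = x ++ (w ++ y) := by rw [hxy, List.append_assoc]
  refine ⟨List.ne_nil_of_length_pos (by have := hmax.1.2; omega), ?_, fun i hi => ?_⟩
  · obtain ⟨e', he'⟩ := List.suffix_of_suffix_length_le (List.suffix_append e w)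
      (hxy' ▸ List.suffix_append x (w ++ y)) (by simp)
    exact ⟨e', he'.symm⟩
  · have hocc : occursAt w (e ++ w) (x.length + i) := hxy' ▸ hi.append_left x
    have hbound := hi.add_length_le
    rw [List.length_append] at hbound
    by_cases hlt : x.length + i < e.length
    · exact Or.inl (by have := hmax.2 ⟨hocc, hlt⟩; omega)
    · exact Or.inr (by omega)

theorem append_mem_RightLang_mul_kstar_MinLang (w e : List α) :
    e ++ w ∈ toLanguage (RightLang w) * (toLanguage (MinLang w))∗ := by
  induction hn : e.length using Nat.strong_induction_on generalizing e with
  | _ n ih =>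
  by_cases hprev : ∃ q, occursAt w (e ++ w) q ∧ q < e.length
  · obtain ⟨q, hq, hmax⟩ :=
      BddAbove.exists_isGreatest_of_nonempty ⟨e.length, fun q h => h.2.le⟩ hprev
    obtain ⟨⟨x, y, hxy, rfl⟩, hlt⟩ := hq
    have hy : y ∈ MinLang w := mem_MinLang_of_isGreatest hxy ⟨⟨⟨x, y, hxy, rfl⟩, hlt⟩, hmax⟩
    have hx := ih x.length (hn ▸ hlt) x rfl
    rw [hxy]
    have hstep : toLanguage (RightLang w) * (toLanguage (MinLang w))∗ * toLanguage (MinLang w) ≤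
        toLanguage (RightLang w) * (toLanguage (MinLang w))∗ := by
      rw [mul_assoc]
      exact mul_le_mul_right kstar_mul_le_kstar _
    exact hstep (Language.append_mem_mul hx hy)
  · push Not at hprev
    exact le_mul_of_one_le_right' (one_le_kstar (a := toLanguage (MinLang w)))
      (mem_RightLang_of_forall_le hprev)

theorem exists_eq_append_append_mem_UltLang {w T : List α} (hT : T ∉ NotLang w) :
    ∃ x y, T = x ++ w ++ y ∧ y ∈ UltLang w := by
  simp only [NotLang, Set.mem_ofPred_eq, not_forall, not_not] at hT
  obtain ⟨p, ⟨x, y, rfl, rfl⟩, hmax⟩ :=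
    BddAbove.exists_isGreatest_of_nonempty
      ⟨T.length, fun _ h => (Nat.le_add_right _ _).trans (occursAt.add_length_le h)⟩ hT
  refine ⟨x, y, rfl, fun j hj => ?_⟩
  have hocc : occursAt w (x ++ w ++ y) (x.length + j) := by
    simpa only [List.append_assoc] using hj.append_left x
  have := hmax hocc
  omega

theorem MinLang_subset_CorrPos_union (w : List α) :
    MinLang w ⊆ CorrPos w ∪ (MinLang w \ KCode w) :=
  fun m hm => (em (m ∈ KCode w)).imp (fun hK => hK.1) (fun hK => ⟨hm, hK⟩)

end

theorem clump_decomposition_general {α : Type*} (w : List α) :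
    (Set.univ : Set (List α)) =
      NotLang w ∪
        lconc
          (lconc (lconc (RightLang w) (lstar (CorrPos w)))
            (lstar (lconc (MinLang w \ KCode w) (lstar (CorrPos w)))))
          (UltLang w) := by
  refine (Set.eq_univ_of_forall fun T => ?_).symm
  by_cases hN : T ∈ NotLang w
  · exact Or.inl hN
  obtain ⟨x, y, rfl, hy⟩ := exists_eq_append_append_mem_UltLang hN
  refine Or.inr ⟨x ++ w, ?_, y, hy, rfl⟩
  rw [← mem_toLanguage]
  simp only [toLanguage_lconc, toLanguage_lstar]
  rw [mul_assoc]
  have hM : (toLanguage (MinLang w))∗ ≤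
      (toLanguage (CorrPos w))∗ * (toLanguage (MinLang w \ KCode w) * (toLanguage (CorrPos w))∗)∗ :=
    (kstar_mono (MinLang_subset_CorrPos_union w)).trans (kstar_add_le_kstar_mul_kstar _ _)
  exact mul_le_mul_right hM _ (append_mem_RightLang_mul_kstar_MinLang w x)

/-- the fundamental clump decomposition
`A* = N(w) ∪ R(w)·(C∘(w))*·((M(w) \ K(w))·(C∘(w))*)*·U(w)`. -/
theorem clump_decomposition {α : Type*} (w : List α) (hw : w ≠ []) :
    (Set.univ : Set (List α)) =
      NotLang w ∪
        lconc
          (lconc (lconc (RightLang w) (lstar (CorrPos w)))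
            (lstar (lconc (MinLang w \ KCode w) (lstar (CorrPos w)))))
          (UltLang w) :=
  clump_decomposition_general w
end

section
/- Characterization of clumps of a single word: a word v is a clustering-word for w (i.e., w occurs in v, and for every pair of consecutive positions i, i+1 of v there is a common occurrence of w in v covering both) if and only if v ∈ {w}·(C∘(w))*, i.e., v = w ++ c₁ ++ ⋯ ++ c_m for some (possibly empty) sequence of words c₁, …, c_m in C∘(w). -/
/-!
A clustering-word `v` for `w` ends with an occurrence of `w` (cover its last two positions),
and every occurrence of `w` in `v` other than the first overlaps an earlier one (cover the
position just before it). Two overlapping occurrences `x ++ w ++ y = u ++ w` with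
`|x| < |u| < |x| + |w|` exhibit `y` as a nonempty autocorrelation of `w`, and peeling it off
leaves a shorter word with the same two properties. Conversely, appending `c ∈ C(w)` to a word
ending in `w` creates a new final occurrence of `w` that covers all the new positions.
-/

section ClusteringWords

variable {α : Type*}

def IsClusteringWord (w v : List α) : Prop :=
  (∃ i, occursAt w v i) ∧
    ∀ i, i + 1 < v.length → ∃ j, occursAt w v j ∧ j ≤ i ∧ i + 1 < j + w.length

def OccurrencesChained (w v : List α) : Prop :=
  ∀ j, occursAt w v j → 0 < j → ∃ q, occursAt w v q ∧ q < j ∧ j < q + w.length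

section Occurrences

variable {w v : List α} {j : ℕ}

theorem occursAt.add_length_le_s11 (h : occursAt w v j) : j + w.length ≤ v.length := by
  obtain ⟨x, y, rfl, rfl⟩ := h
  simp only [List.length_append]
  omega

theorem occursAt.append_right (c : List α) (h : occursAt w v j) : occursAt w (v ++ c) j := by
  obtain ⟨x, y, rfl, hx⟩ := h
  exact ⟨x, y ++ c, by simp, hx⟩

theorem occursAt.of_append_right {c : List α} (h : occursAt w (v ++ c) j)
    (hle : j + w.length ≤ v.length) : occursAt w v j := by
  obtain ⟨x, y, hv, rfl⟩ := h
  obtain ⟨y', hy'⟩ : x ++ w <+: v :=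
    List.prefix_of_prefix_length_le ⟨y, hv.symm⟩ (List.prefix_append v c) (by simpa using hle)
  exact ⟨x, y', hy'.symm, rfl⟩

theorem occursAt.isSuffix (h : occursAt w v j) (hj : v.length ≤ j + w.length) : w <:+ v := by
  obtain ⟨x, y, rfl, rfl⟩ := h
  have hy : y = [] := by
    simp only [List.length_append] at hj
    exact List.eq_nil_of_length_eq_zero (by omega)
  exact ⟨x, by simp [hy]⟩

theorem List.IsSuffix.occursAt (h : w <:+ v) : occursAt w v (v.length - w.length) := by
  obtain ⟨t, rfl⟩ := h
  exact ⟨t, [], by simp, by simp⟩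

end Occurrences

section Correlation

variable {w : List α}

theorem List.IsSuffix.append_of_mem_corr {v c : List α} (h : w <:+ v) (hc : c ∈ Corr w) :
    w <:+ v ++ c := by
  obtain ⟨t, rfl⟩ := h
  obtain ⟨-, e, he⟩ := hc
  exact ⟨t ++ e, by simp [he]⟩

theorem mem_corrPos_of_overlap {x y u : List α} (h : x ++ w ++ y = u ++ w)
    (hxu : x.length < u.length) (hux : u.length < x.length + w.length) : y ∈ CorrPos w := by
  obtain ⟨e, rfl⟩ : x <+: u :=
    List.prefix_of_prefix_length_le ⟨w ++ y, by rw [← h, List.append_assoc]⟩ ⟨w, rfl⟩ hxu.le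
  have hlen := congrArg List.length h
  simp only [List.length_append] at hlen hxu hux
  have hcorr : w ++ y = e ++ w := by
    simpa only [List.append_assoc, List.append_cancel_left_eq] using h
  refine ⟨⟨by omega, e, hcorr⟩, fun hy => ?_⟩
  simp only [Set.mem_singleton_iff.mp hy, List.length_nil] at hlen
  omega

end Correlation

theorem mem_lconc_singleton_lstar_iff {w v : List α} {L : Set (List α)} :
    v ∈ lconc {w} (lstar L) ↔ ∃ S : List (List α), (∀ c ∈ S, c ∈ L) ∧ v = w ++ S.flatten := by
  constructor
  · rintro ⟨_, rfl, _, ⟨S, hS, rfl⟩, rfl⟩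
    exact ⟨S, hS, rfl⟩
  · rintro ⟨S, hS, rfl⟩
    exact ⟨w, rfl, S.flatten, ⟨S, hS, rfl⟩, rfl⟩

theorem append_mem_lconc_singleton_lstar {w v c : List α} {L : Set (List α)}
    (hv : v ∈ lconc {w} (lstar L)) (hc : c ∈ L) : v ++ c ∈ lconc {w} (lstar L) := by
  obtain ⟨S, hS, rfl⟩ := mem_lconc_singleton_lstar_iff.mp hv
  refine mem_lconc_singleton_lstar_iff.mpr ⟨S ++ [c], ?_, by simp⟩
  simpa [or_imp, forall_and] using ⟨hS, hc⟩

theorem lconc_singleton_lstar_induction {w : List α} {L : Set (List α)} {P : List α → Prop}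
    (base : P w) (step : ∀ v c, v ∈ lconc {w} (lstar L) → P v → c ∈ L → P (v ++ c))
    {v : List α} (hv : v ∈ lconc {w} (lstar L)) : P v := by
  obtain ⟨S, hS, rfl⟩ := mem_lconc_singleton_lstar_iff.mp hv
  clear hv
  induction S using List.reverseRecOn with
  | nil => simpa using base
  | append_singleton S c ih =>
    have hS' : ∀ d ∈ S, d ∈ L := fun d hd => hS d (by simp [hd])
    have hc : c ∈ L := hS c (by simp)
    simpa using step _ c (mem_lconc_singleton_lstar_iff.mpr ⟨S, hS', rfl⟩) (ih hS') hc

theorem lstar_mono {L L' : Set (List α)} (h : L ⊆ L') : lstar L ⊆ lstar L' :=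
  fun _ ⟨S, hS, hv⟩ => ⟨S, fun c hc => h (hS c hc), hv⟩

theorem lconc_mono_right {K L L' : Set (List α)} (h : L ⊆ L') : lconc K L ⊆ lconc K L' :=
  fun _ ⟨a, ha, b, hb, hv⟩ => ⟨a, ha, b, h hb, hv⟩

section Forward

variable {w v : List α}

theorem IsClusteringWord.isSuffix (h : IsClusteringWord w v) : w <:+ v := by
  obtain ⟨⟨i, hi⟩, hcov⟩ := h
  have hle := hi.add_length_le_s11
  by_cases hv : v.length ≤ w.length
  · exact hi.isSuffix (by omega)
  rcases eq_or_ne w [] with rfl | hw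
  · exact List.nil_suffix
  have := List.length_pos_iff.mpr hw
  obtain ⟨j, hj, -, hjv⟩ := hcov (v.length - 2) (by omega)
  exact hj.isSuffix (by omega)

theorem IsClusteringWord.occurrencesChained (hw : w ≠ []) (h : IsClusteringWord w v) :
    OccurrencesChained w v := by
  intro j hj hj0
  have := List.length_pos_iff.mpr hw
  have hle := hj.add_length_le_s11
  obtain ⟨q, hq, hqj, hjq⟩ := h.2 (j - 1) (by omega)
  exact ⟨q, hq, by omega, by omega⟩

theorem OccurrencesChained.of_append_right {c : List α} (h : OccurrencesChained w (v ++ c)) :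
    OccurrencesChained w v := by
  intro j hj hj0
  have hle := hj.add_length_le_s11
  obtain ⟨q, hq, hqj, hjq⟩ := h j (hj.append_right c) hj0
  exact ⟨q, hq.of_append_right (by omega), hqj, hjq⟩

theorem OccurrencesChained.mem_lconc_lstar (hsuf : w <:+ v)
    (h : OccurrencesChained w v) : v ∈ lconc {w} (lstar (CorrPos w)) := by
  induction hn : v.length using Nat.strong_induction_on generalizing v with
  | _ n ih =>
  obtain ⟨u, rfl⟩ := hsuf
  rcases eq_or_ne u [] with rfl | hu
  · exact mem_lconc_singleton_lstar_iff.mpr ⟨[], by simp, by simp⟩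
  obtain ⟨q, ⟨x, y, hxy, rfl⟩, hxu, hux⟩ :=
    h u.length ⟨u, [], by simp, rfl⟩ (List.length_pos_iff.mpr hu)
  have hy : y ∈ CorrPos w := mem_corrPos_of_overlap hxy.symm hxu hux
  rw [hxy] at h ⊢
  refine append_mem_lconc_singleton_lstar (ih (x ++ w).length ?_ ⟨x, rfl⟩ h.of_append_right rfl) hy
  have := congrArg List.length hxy
  simp only [List.length_append] at this hn ⊢
  omega

end Forward

section Backward

variable {w v : List α}

theorem isClusteringWord_self (w : List α) : IsClusteringWord w w :=
  ⟨⟨0, [], [], by simp, rfl⟩, fun _ hi => ⟨0, ⟨[], [], by simp, rfl⟩, Nat.zero_le _, by omega⟩⟩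

theorem IsClusteringWord.append_of_mem_corr {c : List α} (h : IsClusteringWord w v)
    (hsuf : w <:+ v) (hc : c ∈ Corr w) : IsClusteringWord w (v ++ c) := by
  refine ⟨h.1.imp fun _ hi => hi.append_right c, fun i hi => ?_⟩
  by_cases hiv : i + 1 < v.length
  · obtain ⟨j, hj, hji, hij⟩ := h.2 i hiv
    exact ⟨j, hj.append_right c, hji, hij⟩
  have := hsuf.length_le
  have := hc.1
  refine ⟨_, (hsuf.append_of_mem_corr hc).occursAt, ?_, ?_⟩ <;>
    simp only [List.length_append] at hi ⊢ <;> omega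

theorem List.IsSuffix.of_mem_lconc_lstar_corr (h : v ∈ lconc {w} (lstar (Corr w))) : w <:+ v :=
  lconc_singleton_lstar_induction (List.suffix_refl w)
    (fun _ _ _ hv hc => hv.append_of_mem_corr hc) h

theorem IsClusteringWord.of_mem_lconc_lstar_corr (h : v ∈ lconc {w} (lstar (Corr w))) :
    IsClusteringWord w v :=
  lconc_singleton_lstar_induction (isClusteringWord_self w)
    (fun _ _ hmem hv hc => hv.append_of_mem_corr (.of_mem_lconc_lstar_corr hmem) hc) h

end Backward

end ClusteringWords

/-- `v` is a clustering-word for `w` (i.e. `w` occurs in `v` and any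
two consecutive positions of `v` are covered by a common occurrence of `w`)
iff `v ∈ {w}·(C∘(w))*`. -/
theorem clusteringWord_iff {α : Type*} (w : List α) (hw : w ≠ []) (v : List α) :
    ((∃ i, occursAt w v i) ∧
      ∀ i, i + 1 < v.length →
        ∃ j, occursAt w v j ∧ j ≤ i ∧ i + 1 < j + w.length) ↔
    v ∈ lconc {w} (lstar (CorrPos w)) := by
  change IsClusteringWord w v ↔ _
  exact ⟨fun h => (h.occurrencesChained hw).mem_lconc_lstar h.isSuffix,
    fun h => .of_mem_lconc_lstar_corr (lconc_mono_right (lstar_mono Set.sdiff_subset) h)⟩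
end

section
/- In the Bernoulli model, the probability that an occurrence of w at a given position is the last occurrence of its clump equals π(w)·(1 − Σ_{κ∈K(w)} π(κ)): precisely, for a nonempty word w and a position i with i + 2|w| − 1 ≤ n, the probability that a random text T of length n has an occurrence of w at position i and no occurrence of w at any position j with i < j < i + |w| equals π(w)·(1 − Σ_{κ∈K(w)} π(κ)). -/
section Words

variable {α : Type*}

theorem occursAt_iff_drop_take {u L : List α} {i : ℕ} :
    occursAt u L i ↔ i + u.length ≤ L.length ∧ (L.drop i).take u.length = u := by
  constructor
  · rintro ⟨x, y, rfl, rfl⟩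
    refine ⟨by simp, ?_⟩
    rw [List.append_assoc, List.drop_left, List.take_left]
  · rintro ⟨hlen, hwin⟩
    refine ⟨L.take i, L.drop (i + u.length), ?_, by simp; omega⟩
    conv_lhs => rw [← List.take_append_drop i L, ← List.take_append_drop u.length (L.drop i)]
    rw [hwin, List.drop_drop, List.append_assoc]

theorem occursAt.of_prefix {u v L : List α} {i : ℕ} (ho : occursAt u L i) (h : v <+: u) :
    occursAt v L i := by
  obtain ⟨x, y, rfl, rfl⟩ := ho
  obtain ⟨r, rfl⟩ := h
  exact ⟨x, r ++ y, by simp, rfl⟩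

theorem occursAt.shift_of_mem_Corr {w c L : List α} {i : ℕ} (hc : c ∈ Corr w)
    (ho : occursAt (w ++ c) L i) : occursAt w L (i + c.length) := by
  obtain ⟨-, e, hew⟩ := hc
  obtain ⟨x, y, rfl, rfl⟩ := ho
  have helen : e.length = c.length := by
    have := congrArg List.length hew
    simp only [List.length_append] at this
    omega
  refine ⟨x ++ e, y, ?_, by simp [helen]⟩
  rw [List.append_assoc x, hew]
  simp

theorem exists_mem_CorrPos_of_occursAt {w L : List α} {i j : ℕ} (hi : occursAt w L i)
    (hj : occursAt w L j) (hij : i < j) (hji : j < i + w.length) :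
    ∃ c ∈ CorrPos w, occursAt (w ++ c) L i := by
  rw [occursAt_iff_drop_take] at hi hj
  set c := (L.drop (i + w.length)).take (j - i)
  have hclen : c.length = j - i := by simp [c]; omega
  have hwc : w ++ c = (L.drop i).take (w.length + (j - i)) := by
    rw [List.take_add, hi.2, List.drop_drop]
  have hew : (L.drop i).take (j - i) ++ w = (L.drop i).take (j - i + w.length) := by
    rw [List.take_add, List.drop_drop, show i + (j - i) = j by omega, hj.2]
  refine ⟨c, ⟨⟨by omega, _, by rw [hwc, hew, Nat.add_comm]⟩, ?_⟩, ?_⟩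
  · intro hnil
    rw [Set.mem_singleton_iff.mp hnil, List.length_nil] at hclen
    omega
  · rw [occursAt_iff_drop_take, List.length_append, hwc, hclen]
    exact ⟨by omega, rfl⟩

theorem length_pos_of_mem_KCode {w κ : List α} (hκ : κ ∈ KCode w) : 0 < κ.length :=
  List.length_pos_iff.mpr hκ.1.2

theorem length_lt_of_mem_KCode {w κ : List α} (hκ : κ ∈ KCode w) : κ.length < w.length :=
  hκ.1.1.1

theorem KCode_finite [Finite α] (w : List α) : (KCode w).Finite :=
  (List.finite_length_lt α w.length).subset fun _ ↦ length_lt_of_mem_KCode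

theorem exists_mem_KCode_prefix {w c : List α} (hc : c ∈ CorrPos w) :
    ∃ κ ∈ KCode w, κ <+: c := by
  by_cases hdecomp : c ∈ lconc (CorrPos w) (Aplus α)
  · obtain ⟨a, ha, b, hb, hab⟩ := hdecomp
    have : a.length < c.length := by
      rw [hab, List.length_append]
      exact Nat.lt_add_of_pos_right (List.length_pos_iff.mpr hb)
    obtain ⟨κ, hκ, hκa⟩ := exists_mem_KCode_prefix ha
    exact ⟨κ, hκ, hab ▸ hκa.trans (List.prefix_append a b)⟩
  · exact ⟨c, ⟨hc, hdecomp⟩, List.prefix_rfl⟩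
termination_by c.length

theorem eq_of_prefix_of_mem_KCode {w κ₁ κ₂ : List α} (h₁ : κ₁ ∈ KCode w) (h₂ : κ₂ ∈ KCode w)
    (h : κ₁ <+: κ₂) : κ₁ = κ₂ := by
  obtain ⟨r, rfl⟩ := h
  rcases eq_or_ne r [] with rfl | hr
  · simp
  · exact absurd ⟨κ₁, h₁.1, r, hr, rfl⟩ h₂.2

theorem eq_of_occursAt_append_KCode {w κ₁ κ₂ L : List α} {i : ℕ} (h₁ : κ₁ ∈ KCode w)
    (h₂ : κ₂ ∈ KCode w) (ho₁ : occursAt (w ++ κ₁) L i) (ho₂ : occursAt (w ++ κ₂) L i) :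
    κ₁ = κ₂ := by
  rw [occursAt_iff_drop_take] at ho₁ ho₂
  have p₁ : w ++ κ₁ <+: L.drop i := ho₁.2 ▸ List.take_prefix _ _
  have p₂ : w ++ κ₂ <+: L.drop i := ho₂.2 ▸ List.take_prefix _ _
  rcases List.prefix_or_prefix_of_prefix p₁ p₂ with h | h
  · exact eq_of_prefix_of_mem_KCode h₁ h₂ ((List.prefix_append_right_inj w).mp h)
  · exact (eq_of_prefix_of_mem_KCode h₂ h₁ ((List.prefix_append_right_inj w).mp h)).symm

theorem exists_occursAt_within_iff_exists_KCode {w L : List α} {i : ℕ} (hi : occursAt w L i) :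
    (∃ j, i < j ∧ j < i + w.length ∧ occursAt w L j) ↔
      ∃ κ ∈ KCode w, occursAt (w ++ κ) L i := by
  constructor
  · rintro ⟨j, hij, hji, hj⟩
    obtain ⟨c, hc, hoc⟩ := exists_mem_CorrPos_of_occursAt hi hj hij hji
    obtain ⟨κ, hκ, hκc⟩ := exists_mem_KCode_prefix hc
    exact ⟨κ, hκ, hoc.of_prefix ((List.prefix_append_right_inj w).mpr hκc)⟩
  · rintro ⟨κ, hκ, ho⟩
    exact ⟨i + κ.length, by have := length_pos_of_mem_KCode hκ; omega,
      by have := length_lt_of_mem_KCode hκ; omega, ho.shift_of_mem_Corr hκ.1.1⟩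

theorem occursAt_ofFn_iff {n i : ℕ} (u : List α) (h : i + u.length ≤ n) (T : Fin n → α) :
    occursAt u (List.ofFn T) i ↔
      ∀ k : Fin u.length, T ((Fin.natAddEmb i).trans (Fin.castLEEmb h) k) = u[k] := by
  rw [occursAt_iff_drop_take, List.length_ofFn]
  simp only [h, true_and, List.ext_getElem_iff, List.length_take, List.length_drop,
    List.length_ofFn, List.getElem_take, List.getElem_drop, List.getElem_ofFn]
  exact ⟨fun ⟨_, hall⟩ k ↦ hall k (by omega) k.isLt,
    fun hall ↦ ⟨by omega, fun k _ hk ↦ hall ⟨k, hk⟩⟩⟩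

open Classical in
theorem ite_lastOccurrence_eq_sub_sum {M : Type*} [AddCommGroup M] {w L : List α} {i : ℕ}
    {K : Finset (List α)} (hK : ↑K = KCode w) (x : M) :
    (if occursAt w L i ∧ ∀ j, i < j → j < i + w.length → ¬ occursAt w L j then x else 0) =
      (if occursAt w L i then x else 0) - ∑ κ ∈ K, if occursAt (w ++ κ) L i then x else 0 := by
  have hmem (κ : List α) : κ ∈ K ↔ κ ∈ KCode w := by rw [← hK, Finset.mem_coe]
  rw [Finset.sum_ite_zero K _ fun a ha b hb ↦
    eq_of_occursAt_append_KCode ((hmem a).mp ha) ((hmem b).mp hb)]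
  by_cases hi : occursAt w L i
  · have hlast := exists_occursAt_within_iff_exists_KCode hi
    simp only [hmem] at hlast ⊢
    by_cases hex : ∃ κ ∈ KCode w, occursAt (w ++ κ) L i
    · obtain ⟨j, hij, hji, hj⟩ := hlast.mpr hex
      rw [if_neg fun ⟨_, hno⟩ ↦ hno j hij hji hj, if_pos hi, if_pos hex, sub_self]
    · rw [if_pos ⟨hi, fun j hij hji hj ↦ hex (hlast.mp ⟨j, hij, hji, hj⟩)⟩, if_pos hi, if_neg hex,
        sub_zero]
  · have hnone : ¬ ∃ κ ∈ K, occursAt (w ++ κ) L i :=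
      fun ⟨κ, _, ho⟩ ↦ hi (ho.of_prefix (List.prefix_append w κ))
    simp [hi, hnone]

end Words

section Bernoulli

variable {ι κ α R : Type*} [Fintype ι] [DecidableEq ι] [Fintype α] [CommSemiring R] (p : α → R)

open Classical in
theorem sum_ite_forall_mem_eq_prod (hsum : ∑ a, p a = 1) (S : Finset ι) (f : ι → α) :
    ∑ T : ι → α, (if ∀ j ∈ S, T j = f j then ∏ j, p (T j) else 0) = ∏ j ∈ S, p (f j) := by
  let g : ι → α → R := fun j a ↦ if j ∈ S then (if a = f j then p a else 0) else p a
  have hfactor (T : ι → α) :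
      (if ∀ j ∈ S, T j = f j then ∏ j, p (T j) else 0) = ∏ j, g j (T j) := by
    split_ifs with hT
    · exact Finset.prod_congr rfl fun j _ ↦ by by_cases hj : j ∈ S <;> simp [g, hj, hT j]
    · push Not at hT
      obtain ⟨j, hj, hne⟩ := hT
      exact (Finset.prod_eq_zero (Finset.mem_univ j) (by simp [g, hj, hne])).symm
  have hmarginal (j : ι) : ∑ a, g j a = if j ∈ S then p (f j) else 1 := by
    by_cases hj : j ∈ S <;> simp [g, hj, hsum]
  simp_rw [hfactor, ← Fintype.prod_sum, hmarginal, Finset.prod_ite_mem, Finset.univ_inter]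

open Classical in
theorem sum_ite_forall_embedding_eq_prod [Nontrivial R] [Fintype κ] (hsum : ∑ a, p a = 1)
    (e : κ ↪ ι) (f : κ → α) :
    ∑ T : ι → α, (if ∀ k, T (e k) = f k then ∏ j, p (T j) else 0) = ∏ k, p (f k) := by
  have : Nonempty α := by
    rcases isEmpty_or_nonempty α with h | h
    · simp at hsum
    · exact h
  let F := Function.extend e f fun _ ↦ Classical.arbitrary α
  have hF (k : κ) : F (e k) = f k := e.injective.extend_apply f _ k
  have hcyl (T : ι → α) : (∀ k, T (e k) = f k) ↔ ∀ j ∈ Finset.univ.map e, T j = F j := by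
    simp [hF]
  simp_rw [hcyl, sum_ite_forall_mem_eq_prod p hsum, Finset.prod_map, hF]

open Classical in
theorem sum_ite_occursAt_eq_prod [Nontrivial R] (hsum : ∑ a, p a = 1) {n i : ℕ} (u : List α)
    (h : i + u.length ≤ n) :
    ∑ T : Fin n → α, (if occursAt u (List.ofFn T) i then ∏ j, p (T j) else 0) = (u.map p).prod := by
  simp_rw [occursAt_ofFn_iff u h]
  convert (sum_ite_forall_embedding_eq_prod p hsum ((Fin.natAddEmb i).trans (Fin.castLEEmb h))
    fun k ↦ u[k]).trans (Fin.prod_univ_fun_getElem u p)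

end Bernoulli

open Classical in
theorem bernoulli_last_occurrence_of_clump_general {α : Type*} [Fintype α] (p : α → ℝ)
    (hsum : ∑ a, p a = 1)
    (w : List α) (hw : w ≠ []) (n i : ℕ) (hn : i + 2 * w.length - 1 ≤ n) :
    ∑ T : Fin n → α,
      (if occursAt w (List.ofFn T) i ∧
          (∀ j, i < j → j < i + w.length → ¬ occursAt w (List.ofFn T) j)
        then ∏ j, p (T j) else 0)
    = (w.map p).prod * (1 - ∑ᶠ κ ∈ KCode w, (κ.map p).prod) := by
  have hw_pos : 0 < w.length := List.length_pos_iff.mpr hw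
  have hK := KCode_finite w
  simp_rw [ite_lastOccurrence_eq_sub_sum hK.coe_toFinset, Finset.sum_sub_distrib,
    sum_ite_occursAt_eq_prod p hsum w (show i + w.length ≤ n by omega)]
  rw [Finset.sum_comm, finsum_mem_eq_finite_toFinset_sum _ hK, mul_sub, mul_one, Finset.mul_sum]
  congr 1
  refine Finset.sum_congr rfl fun κ hκ ↦ ?_
  have hκ_len := length_lt_of_mem_KCode (hK.mem_toFinset.mp hκ)
  rw [sum_ite_occursAt_eq_prod p hsum (w ++ κ) (by simp only [List.length_append]; omega),
    List.map_append, List.prod_append]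

open Classical in
/-- Bernoulli model: for `i + 2|w| − 1 ≤ n`, the probability that a
random text of length `n` has an occurrence of `w` at position `i` and no
occurrence of `w` at any position `j` with `i < j < i + |w|` equals
`π(w)·(1 − Σ_{κ ∈ K(w)} π(κ))`. -/
theorem bernoulli_last_occurrence_of_clump {α : Type*} [Fintype α] (p : α → ℝ)
    (hp : ∀ a, 0 ≤ p a) (hsum : ∑ a, p a = 1)
    (w : List α) (hw : w ≠ []) (n i : ℕ) (hn : i + 2 * w.length - 1 ≤ n) :
    ∑ T : Fin n → α,
      (if occursAt w (List.ofFn T) i ∧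
          (∀ j, i < j → j < i + w.length → ¬ occursAt w (List.ofFn T) j)
        then ∏ j, p (T j) else 0)
    = (w.map p).prod * (1 - ∑ᶠ κ ∈ KCode w, (κ.map p).prod) :=
  bernoulli_last_occurrence_of_clump_general p hsum w hw n i hn
end
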